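/- (Proposition 1, perturbation part.) Let n be a positive integer, g ∈ ℝⁿ a row vector, H an n×n real matrix with H·H = 0, and μ, γ real numbers. Define the MIFGSM-with-APAA iterates G_1 = g, Δ_1 = γ·g, and for every t ≥ 1: G_{t+1} = μ·G_t + (g + Δ_t H) and Δ_{t+1} = Δ_t + γ·G_{t+1}, where Δ_t H denotes the row-vector–matrix product. Then for every m ≥ 1, the adversarial perturbation satisfies Δ_m = (c_m·γ)·g + (d_m·γ²)·(g H), where c_m and d_m are the MIFGSM-with-APAA coefficient sequences. -/

import Mathlib

/-! Since `H * H = 0`, every iterate stays in the span of `g` and `g H`, and only the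
`g`-component of `Δ t` survives multiplication by `H`. Tracking the two components turns the
vector recursion into the scalar recursions `a (m+1) = μ a m + 1`, `b (m+2) = μ b (m+1) + c (m+1)`,
`c (m+1) = c m + a (m+1)` and `d (m+2) = d (m+1) + b (m+2)`, which the closed-form sums satisfy
after reindexing them over `range`. -/

/-- First-order gradient coefficient: a_m = ∑_{i=1}^{m} μ^{i-1}. -/
noncomputable def aCoef (μ : ℝ) (m : ℕ) : ℝ :=
  ∑ i ∈ Finset.Icc 1 m, μ ^ (i - 1)

/-- Second-order gradient coefficient: b_m = ∑_{i=2}^{m} (m-i+1)(i-1)μ^{i-2}. -/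
noncomputable def bCoef (μ : ℝ) (m : ℕ) : ℝ :=
  ∑ i ∈ Finset.Icc 2 m, ((m : ℝ) - (i : ℝ) + 1) * ((i : ℝ) - 1) * μ ^ (i - 2)

/-- First-order perturbation coefficient: c_m = ∑_{i=1}^{m} (m-i+1)μ^{i-1}. -/
noncomputable def cCoef (μ : ℝ) (m : ℕ) : ℝ :=
  ∑ i ∈ Finset.Icc 1 m, ((m : ℝ) - (i : ℝ) + 1) * μ ^ (i - 1)

/-- Second-order perturbation coefficient:
    d_m = ∑_{i=2}^{m} ((m-i+2)(m-i+1)(i-1)/2)μ^{i-2}. -/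
noncomputable def dCoef (μ : ℝ) (m : ℕ) : ℝ :=
  ∑ i ∈ Finset.Icc 2 m,
    (((m : ℝ) - (i : ℝ) + 2) * ((m : ℝ) - (i : ℝ) + 1) * ((i : ℝ) - 1) / 2) * μ ^ (i - 2)

open Finset Matrix

lemma aCoef_eq_sum_range (μ : ℝ) (m : ℕ) : aCoef μ m = ∑ i ∈ range m, μ ^ i := by
  rw [aCoef, ← Ico_add_one_right_eq_Icc, sum_Ico_eq_sum_range]
  simp

lemma cCoef_eq_sum_range (μ : ℝ) (m : ℕ) :
    cCoef μ m = ∑ i ∈ range m, ((m : ℝ) - i) * μ ^ i := by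
  rw [cCoef, ← Ico_add_one_right_eq_Icc, sum_Ico_eq_sum_range]
  refine sum_congr rfl fun i _ => ?_
  simp only [Nat.add_sub_cancel_left, Nat.cast_add, Nat.cast_one]
  ring

lemma bCoef_succ_eq_sum_range (μ : ℝ) (m : ℕ) :
    bCoef μ (m + 1) = ∑ i ∈ range m, ((m : ℝ) - i) * (i + 1) * μ ^ i := by
  rw [bCoef, ← Ico_add_one_right_eq_Icc, sum_Ico_eq_sum_range, show m + 1 + 1 - 2 = m by omega]
  refine sum_congr rfl fun i _ => ?_
  simp only [Nat.add_sub_cancel_left, Nat.cast_add, Nat.cast_one, Nat.cast_ofNat]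
  ring

lemma dCoef_succ_eq_sum_range (μ : ℝ) (m : ℕ) :
    dCoef μ (m + 1) = ∑ i ∈ range m, ((m : ℝ) + 1 - i) * (m - i) * (i + 1) / 2 * μ ^ i := by
  rw [dCoef, ← Ico_add_one_right_eq_Icc, sum_Ico_eq_sum_range, show m + 1 + 1 - 2 = m by omega]
  refine sum_congr rfl fun i _ => ?_
  simp only [Nat.add_sub_cancel_left, Nat.cast_add, Nat.cast_one, Nat.cast_ofNat]
  ring

lemma aCoef_succ (μ : ℝ) (m : ℕ) : aCoef μ (m + 1) = μ * aCoef μ m + 1 := by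
  simp only [aCoef_eq_sum_range, geom_sum_succ]

lemma cCoef_succ (μ : ℝ) (m : ℕ) : cCoef μ (m + 1) = cCoef μ m + aCoef μ (m + 1) := by
  have hc : cCoef μ m = ∑ i ∈ range (m + 1), ((m : ℝ) - i) * μ ^ i := by
    simp [cCoef_eq_sum_range, sum_range_succ]
  rw [hc, aCoef_eq_sum_range, cCoef_eq_sum_range, ← sum_add_distrib]
  refine sum_congr rfl fun i _ => ?_
  push_cast
  ring

lemma bCoef_succ_succ (μ : ℝ) (m : ℕ) :
    bCoef μ (m + 2) = μ * bCoef μ (m + 1) + cCoef μ (m + 1) := by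
  rw [bCoef_succ_eq_sum_range, bCoef_succ_eq_sum_range, cCoef_eq_sum_range, sum_range_succ',
    sum_range_succ' _ m, mul_sum, ← add_assoc, ← sum_add_distrib]
  congr 1
  · refine sum_congr rfl fun i _ => ?_
    push_cast
    ring
  · simp

lemma dCoef_succ_succ (μ : ℝ) (m : ℕ) :
    dCoef μ (m + 2) = dCoef μ (m + 1) + bCoef μ (m + 2) := by
  have hd : dCoef μ (m + 1) =
      ∑ i ∈ range (m + 1), ((m : ℝ) + 1 - i) * (m - i) * (i + 1) / 2 * μ ^ i := by
    simp [dCoef_succ_eq_sum_range, sum_range_succ]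
  rw [hd, dCoef_succ_eq_sum_range, bCoef_succ_eq_sum_range, ← sum_add_distrib]
  refine sum_congr rfl fun i _ => ?_
  push_cast
  ring

lemma vecMul_smul_add_smul_vecMul_of_mul_self_eq_zero {ι R : Type*} [Fintype ι]
    [CommSemiring R] {H : Matrix ι ι R} (hH : H * H = 0) (v : ι → R) (a b : R) :
    (a • v + b • v ᵥ* H) ᵥ* H = a • v ᵥ* H := by
  rw [Matrix.add_vecMul, Matrix.smul_vecMul, Matrix.smul_vecMul, Matrix.vecMul_vecMul, hH,
    Matrix.vecMul_zero, smul_zero, add_zero]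

theorem mifgsm_apaa_iterates_closed_form {ι : Type*} [Fintype ι] (g : ι → ℝ)
    (H : Matrix ι ι ℝ) (hH : H * H = 0) (μ γ : ℝ) (G Δ : ℕ → ι → ℝ)
    (hG1 : G 1 = g) (hΔ1 : Δ 1 = γ • g)
    (hG : ∀ t : ℕ, 1 ≤ t → G (t + 1) = μ • G t + (g + Δ t ᵥ* H))
    (hΔ : ∀ t : ℕ, 1 ≤ t → Δ (t + 1) = Δ t + γ • G (t + 1)) (k : ℕ) :
    G (k + 1) = aCoef μ (k + 1) • g + (bCoef μ (k + 1) * γ) • g ᵥ* H ∧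
      Δ (k + 1) = (cCoef μ (k + 1) * γ) • g + (dCoef μ (k + 1) * γ ^ 2) • g ᵥ* H := by
  induction k with
  | zero => simp [hG1, hΔ1, aCoef, bCoef, cCoef, dCoef]
  | succ k ih =>
    obtain ⟨ihG, ihΔ⟩ := ih
    have hGk : G (k + 2) = aCoef μ (k + 2) • g + (bCoef μ (k + 2) * γ) • g ᵥ* H := by
      rw [hG (k + 1) k.succ_pos, ihG, ihΔ,
        vecMul_smul_add_smul_vecMul_of_mul_self_eq_zero hH, aCoef_succ μ (k + 1), bCoef_succ_succ]
      module
    refine ⟨hGk, ?_⟩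
    rw [hΔ (k + 1) k.succ_pos, hGk, ihΔ, cCoef_succ μ (k + 1), dCoef_succ_succ]
    module

theorem mifgsm_apaa_perturbation_closed_form_general
    (n : ℕ) (g : Fin n → ℝ) (H : Matrix (Fin n) (Fin n) ℝ)
    (hH : H * H = 0) (μ γ : ℝ)
    (G Δ : ℕ → Fin n → ℝ)
    (hG1 : G 1 = g) (hΔ1 : Δ 1 = γ • g)
    (hG : ∀ t : ℕ, 1 ≤ t → G (t + 1) = μ • G t + (g + Matrix.vecMul (Δ t) H))
    (hΔ : ∀ t : ℕ, 1 ≤ t → Δ (t + 1) = Δ t + γ • G (t + 1)) :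
    ∀ m : ℕ, 1 ≤ m →
      Δ m = (cCoef μ m * γ) • g + (dCoef μ m * γ ^ 2) • Matrix.vecMul g H := by
  intro m hm
  obtain ⟨k, rfl⟩ := Nat.exists_eq_add_of_le' hm
  exact (mifgsm_apaa_iterates_closed_form g H hH μ γ G Δ hG1 hΔ1 hG hΔ k).2

/-- Proposition 1, perturbation part: under the first-order model (H·H = 0), the
    MIFGSM-with-APAA perturbation satisfies Δ_m = (c_m·γ)·g + (d_m·γ²)·(gH) for every m ≥ 1. -/
theorem mifgsm_apaa_perturbation_closed_form
    (n : ℕ) (hn : 0 < n) (g : Fin n → ℝ) (H : Matrix (Fin n) (Fin n) ℝ)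
    (hH : H * H = 0) (μ γ : ℝ)
    (G Δ : ℕ → Fin n → ℝ)
    (hG1 : G 1 = g) (hΔ1 : Δ 1 = γ • g)
    (hG : ∀ t : ℕ, 1 ≤ t → G (t + 1) = μ • G t + (g + Matrix.vecMul (Δ t) H))
    (hΔ : ∀ t : ℕ, 1 ≤ t → Δ (t + 1) = Δ t + γ • G (t + 1)) :
    ∀ m : ℕ, 1 ≤ m →
      Δ m = (cCoef μ m * γ) • g + (dCoef μ m * γ ^ 2) • Matrix.vecMul g H :=
  mifgsm_apaa_perturbation_closed_form_general n g H hH μ γ G Δ hG1 hΔ1 hG hΔ
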